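/- arXiv:1303.3647 — 6 statements merged into one kernel-verified Lean document; each statement's English description precedes it below -/
import Mathlib

section
/- Let K be a probabilistic theory, let M, N, P be observables on K, and let λ ∈ [0,1]. If M is compatible with N and M is compatible with P, then M is compatible with the observable λN + (1−λ)P. -/
open MeasureTheory

variable {V : Type*} [NormedAddCommGroup V] [NormedSpace ℝ V] [CompleteSpace V]

/-- A probabilistic theory: a σ-convex subset `K` of a real Banach space `V`.
Whenever `λᵢ ∈ [0,1]` with `∑ λᵢ = 1` and `vᵢ ∈ K`, the series `∑ λᵢ vᵢ`
converges in norm to an element of `K`. -/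
def SigmaConvex (K : Set V) : Prop :=
  ∀ (lam : ℕ → ℝ) (v : ℕ → V), (∀ i, 0 ≤ lam i) → (∀ i, v i ∈ K) →
    HasSum lam 1 → ∃ s ∈ K, HasSum (fun i => lam i • v i) s

/-- An (`α`-valued) observable on `K`: a σ-affine map from `K` to the Borel
probability measures on `α`.  Taking `α = ℝ` gives ordinary (1-dimensional)
observables, and `α = Fin n → ℝ` gives `n`-dimensional observables. -/
structure Observable (K : Set V) (α : Type*) [MeasurableSpace α] where
  toFun : K → Measure α
  prob : ∀ s, IsProbabilityMeasure (toFun s)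
  sigmaAffine : ∀ (lam : ℕ → ℝ) (v : ℕ → K) (s : K), (∀ i, 0 ≤ lam i) →
    HasSum lam 1 → HasSum (fun i => lam i • (v i : V)) (s : V) →
    ∀ A : Set α, MeasurableSet A →
      toFun s A = ∑' i, ENNReal.ofReal (lam i) * toFun (v i) A

/-- Observables `M₁, …, Mₙ` on `K` are compatible if they have a joint
observable: an `n`-dimensional observable whose `i`-th marginal is `Mᵢ`
(where the `i`-th marginal of `J` is `s ↦ (A ↦ J s {x | x i ∈ A})`,
i.e. evaluation on the cylinder set `ℝ × ⋯ × A × ⋯ × ℝ`). -/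
def Compatible {K : Set V} {n : ℕ} (Ms : Fin n → Observable K ℝ) : Prop :=
  ∃ J : Observable K (Fin n → ℝ), ∀ (s : K) (A : Set ℝ), MeasurableSet A →
    ∀ i, J.toFun s {x | x i ∈ A} = (Ms i).toFun s A

/-- If `M` is compatible with `N` and `M` is compatible with
`P`, then `M` is compatible with the convex combination `λN + (1-λ)P` for any
`λ ∈ [0,1]`. -/
theorem compatible_with_convex_combination {K : Set V} (hK : SigmaConvex K)
    (M N P : Observable K ℝ) (lam : ℝ) (h0 : 0 ≤ lam) (h1 : lam ≤ 1)
    (hMN : Compatible ![M, N]) (hMP : Compatible ![M, P])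
    (Q : Observable K ℝ)
    (hQ : ∀ (s : K) (A : Set ℝ), MeasurableSet A →
      Q.toFun s A = ENNReal.ofReal lam * N.toFun s A
        + ENNReal.ofReal (1 - lam) * P.toFun s A) :
    Compatible ![M, Q] := by
  obtain ⟨J1, hJ1⟩ := hMN
  obtain ⟨J2, hJ2⟩ := hMP
  have hab : ENNReal.ofReal lam + ENNReal.ofReal (1 - lam) = 1 := by
    rw [← ENNReal.ofReal_add h0 (by linarith)]
    norm_num
  refine ⟨{ toFun := fun s => ENNReal.ofReal lam • J1.toFun s
              + ENNReal.ofReal (1 - lam) • J2.toFun s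
            prob := ?_
            sigmaAffine := ?_ }, ?_⟩
  · intro s
    have p1 := (J1.prob s).measure_univ
    have p2 := (J2.prob s).measure_univ
    constructor
    simp [Measure.add_apply, Measure.smul_apply, p1, p2, hab]
  · intro lam' v s hnn hsum hvs A hA
    have e1 := J1.sigmaAffine lam' v s hnn hsum hvs A hA
    have e2 := J2.sigmaAffine lam' v s hnn hsum hvs A hA
    simp only [Measure.add_apply, Measure.smul_apply, smul_eq_mul, e1, e2,
      ENNReal.tsum_mul_left.symm]
    rw [← ENNReal.tsum_add]
    congr 1
    funext i
    ring
  · intro s A hA i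
    fin_cases i
    · have m1 := hJ1 s A hA 0
      have m2 := hJ2 s A hA 0
      simp only [Matrix.cons_val_zero] at m1 m2 ⊢
      simp [Measure.add_apply, Measure.smul_apply, smul_eq_mul, m1, m2,
        ← add_mul, hab]
    · have m1 := hJ1 s A hA 1
      have m2 := hJ2 s A hA 1
      show (ENNReal.ofReal lam • J1.toFun s + ENNReal.ofReal (1 - lam) • J2.toFun s)
          {x | x 1 ∈ A} = Q.toFun s A
      rw [hQ s A hA]
      simp [Measure.add_apply, Measure.smul_apply, smul_eq_mul, m1, m2]
end

section
/- Let K be a probabilistic theory, let M, N be observables on K, let S, T be trivial observables on K, and let λ ∈ [0,1]. Then the observables λM + (1−λ)T and (1−λ)N + λS are compatible. -/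
open MeasureTheory

variable {V : Type*} [NormedAddCommGroup V] [NormedSpace ℝ V] [CompleteSpace V]

/-- A trivial observable: one that is constantly equal to a fixed Borel
probability measure `p` on `ℝ`. -/
def IsTrivial {K : Set V} (T : Observable K ℝ) : Prop :=
  ∃ p : Measure ℝ, ∀ s, T.toFun s = p

/-!
The joint observable is `s ↦ λ • (M s ⊗ p_S) + (1 - λ) • (p_T ⊗ N s)`, where `p_S`, `p_T` are the
constant values of `S`, `T`: its first marginal is `λ M s + (1 - λ) p_T` and its second
`λ p_S + (1 - λ) N s`. It is σ-affine because σ-affinity, read as an identity of measures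
`μ s = ∑ λᵢ μ (vᵢ)`, survives pushforwards, products with a fixed σ-finite measure and
convex combinations.
-/

open scoped ENNReal

section

variable {E : Type*} [NormedAddCommGroup E] [NormedSpace ℝ E] {K : Set E}
  {α β : Type*} [MeasurableSpace α] [MeasurableSpace β]

def IsSigmaAffine (μ : K → Measure α) : Prop :=
  ∀ (lam : ℕ → ℝ) (v : ℕ → K) (s : K), (∀ i, 0 ≤ lam i) → HasSum lam 1 →
    HasSum (fun i => lam i • (v i : E)) (s : E) →
    μ s = Measure.sum fun i => ENNReal.ofReal (lam i) • μ (v i)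

namespace IsSigmaAffine

variable {μ ν : K → Measure α}

theorem map (hμ : IsSigmaAffine μ) {f : α → β} (hf : Measurable f) :
    IsSigmaAffine fun s => (μ s).map f := by
  intro lam v s hlam hsum hv
  simp only [hμ lam v s hlam hsum hv, Measure.map_sum hf.aemeasurable, Measure.map_smul]

theorem prod_const (hμ : IsSigmaAffine μ) (p : Measure β) [SFinite p] :
    IsSigmaAffine fun s => (μ s).prod p := by
  intro lam v s hlam hsum hv
  simp only [hμ lam v s hlam hsum hv, Measure.prod_sum_left, Measure.prod_smul_left]

theorem smul_add_smul (hμ : IsSigmaAffine μ) (hν : IsSigmaAffine ν) (a b : ℝ≥0∞) :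
    IsSigmaAffine fun s => a • μ s + b • ν s := by
  intro lam v s hlam hsum hv
  ext A hA
  simp only [hμ lam v s hlam hsum hv, hν lam v s hlam hsum hv, Measure.add_apply,
    Measure.smul_apply, Measure.sum_apply _ hA, smul_eq_mul, mul_add, ← ENNReal.tsum_mul_left,
    ← ENNReal.tsum_add, mul_left_comm a, mul_left_comm b]

end IsSigmaAffine

namespace Observable

instance (M : Observable K α) (s : K) : IsProbabilityMeasure (M.toFun s) := M.prob s

theorem isSigmaAffine (M : Observable K α) : IsSigmaAffine M.toFun := by
  intro lam v s hlam hsum hv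
  ext A hA
  simp only [M.sigmaAffine lam v s hlam hsum hv A hA, Measure.sum_apply _ hA,
    Measure.smul_apply, smul_eq_mul]

def ofIsSigmaAffine (μ : K → Measure α) (hprob : ∀ s, IsProbabilityMeasure (μ s))
    (hμ : IsSigmaAffine μ) : Observable K α where
  toFun := μ
  prob := hprob
  sigmaAffine lam v s hlam hsum hv A hA := by
    rw [hμ lam v s hlam hsum hv, Measure.sum_apply _ hA]
    rfl

@[simps! toFun]
noncomputable def map (M : Observable K α) {f : α → β} (hf : Measurable f) : Observable K β :=
  ofIsSigmaAffine _ (fun _ => Measure.isProbabilityMeasure_map hf.aemeasurable)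
    (M.isSigmaAffine.map hf)

@[simps! toFun]
noncomputable def prodConst (M : Observable K α) (p : Measure β) [IsProbabilityMeasure p] :
    Observable K (α × β) :=
  ofIsSigmaAffine _ (fun _ => inferInstance) (M.isSigmaAffine.prod_const p)

noncomputable def constProd (p : Measure α) [IsProbabilityMeasure p] (M : Observable K β) :
    Observable K (α × β) :=
  (M.prodConst p).map measurable_swap

@[simp]
theorem constProd_toFun (p : Measure α) [IsProbabilityMeasure p] (M : Observable K β) (s : K) :
    (constProd p M).toFun s = p.prod (M.toFun s) :=
  Measure.prod_swap

@[simps! toFun]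
noncomputable def convexComb {a b : ℝ≥0∞} (hab : a + b = 1) (M N : Observable K α) :
    Observable K α :=
  ofIsSigmaAffine (fun s => a • M.toFun s + b • N.toFun s)
    (fun s => ⟨by simp [hab]⟩) (M.isSigmaAffine.smul_add_smul N.isSigmaAffine a b)

end Observable

theorem IsTrivial.exists_isProbabilityMeasure {S : Observable K ℝ} (hS : IsTrivial S) :
    ∃ p : Measure ℝ, IsProbabilityMeasure p ∧ ∀ s, S.toFun s = p := by
  obtain ⟨p, hp⟩ := hS
  rcases isEmpty_or_nonempty K with _ | ⟨⟨s⟩⟩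
  -- on an empty `K` the witness `p` is unconstrained
  · exact ⟨Measure.dirac 0, inferInstance, fun s => isEmptyElim s⟩
  · exact ⟨p, hp s ▸ S.prob s, hp⟩

theorem compatible_pair_of_joint {P Q : Observable K ℝ} (J : Observable K (ℝ × ℝ))
    (hP : ∀ (s : K) (A : Set ℝ), MeasurableSet A → J.toFun s (A ×ˢ Set.univ) = P.toFun s A)
    (hQ : ∀ (s : K) (A : Set ℝ), MeasurableSet A → J.toFun s (Set.univ ×ˢ A) = Q.toFun s A) :
    Compatible ![P, Q] := by
  refine ⟨J.map MeasurableEquiv.finTwoArrow.symm.measurable, fun s A hA i => ?_⟩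
  rw [Observable.map_toFun, MeasurableEquiv.map_apply]
  fin_cases i
  · exact (congrArg (J.toFun s) (by ext; simp [MeasurableEquiv.finTwoArrow])).trans (hP s A hA)
  · exact (congrArg (J.toFun s) (by ext; simp [MeasurableEquiv.finTwoArrow])).trans (hQ s A hA)

end

theorem noisy_versions_compatible_general {K : Set V}
    (M N S T : Observable K ℝ) (hS : IsTrivial S) (hT : IsTrivial T)
    (lam : ℝ) (h0 : 0 ≤ lam) (h1 : lam ≤ 1)
    (P Q : Observable K ℝ)
    (hP : ∀ (s : K) (A : Set ℝ), MeasurableSet A →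
      P.toFun s A = ENNReal.ofReal lam * M.toFun s A
        + ENNReal.ofReal (1 - lam) * T.toFun s A)
    (hQ : ∀ (s : K) (A : Set ℝ), MeasurableSet A →
      Q.toFun s A = ENNReal.ofReal (1 - lam) * N.toFun s A
        + ENNReal.ofReal lam * S.toFun s A) :
    Compatible ![P, Q] := by
  obtain ⟨pS, _, hpS⟩ := hS.exists_isProbabilityMeasure
  obtain ⟨pT, _, hpT⟩ := hT.exists_isProbabilityMeasure
  have hlam : ENNReal.ofReal lam + ENNReal.ofReal (1 - lam) = 1 := by
    rw [← ENNReal.ofReal_add h0 (sub_nonneg.2 h1)]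
    simp
  refine compatible_pair_of_joint (.convexComb hlam (M.prodConst pS) (.constProd pT N))
    (fun s A hA => ?_) (fun s A hA => ?_)
  · simp [hP s A hA, hpT, Measure.prod_prod]
  · simp [hQ s A hA, hpS, Measure.prod_prod, add_comm]

/-- For observables `M, N`, trivial observables `S, T`, and
`λ ∈ [0,1]`, the noisy versions `λM + (1-λ)T` and `(1-λ)N + λS` are
compatible. -/
theorem noisy_versions_compatible {K : Set V} (hK : SigmaConvex K)
    (M N S T : Observable K ℝ) (hS : IsTrivial S) (hT : IsTrivial T)
    (lam : ℝ) (h0 : 0 ≤ lam) (h1 : lam ≤ 1)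
    (P Q : Observable K ℝ)
    (hP : ∀ (s : K) (A : Set ℝ), MeasurableSet A →
      P.toFun s A = ENNReal.ofReal lam * M.toFun s A
        + ENNReal.ofReal (1 - lam) * T.toFun s A)
    (hQ : ∀ (s : K) (A : Set ℝ), MeasurableSet A →
      Q.toFun s A = ENNReal.ofReal (1 - lam) * N.toFun s A
        + ENNReal.ofReal lam * S.toFun s A) :
    Compatible ![P, Q] :=
  noisy_versions_compatible_general M N S T hS hT lam h0 h1 P Q hP hQ
end

section
/- Let K be a probabilistic theory and let M₁, …, Mₙ be observables on K. Then the compatibility region J(M₁, …, Mₙ) is a convex subset of [0,1]ⁿ. -/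
open MeasureTheory

variable {V : Type*} [NormedAddCommGroup V] [NormedSpace ℝ V] [CompleteSpace V]

/-- The compatibility region `J(M₁, …, Mₙ)`: the set of `(λ₁, …, λₙ) ∈ [0,1]ⁿ`
for which there exist trivial observables `T₁, …, Tₙ` such that the noisy
versions `λᵢ Mᵢ + (1 - λᵢ) Tᵢ` form a compatible set. -/
def CompatRegion {K : Set V} {n : ℕ} (Ms : Fin n → Observable K ℝ) :
    Set (Fin n → ℝ) :=
  {lam | (∀ i, lam i ∈ Set.Icc (0 : ℝ) 1) ∧
    ∃ Ts Cs : Fin n → Observable K ℝ, (∀ i, IsTrivial (Ts i)) ∧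
      (∀ i (s : K) (A : Set ℝ), MeasurableSet A →
        (Cs i).toFun s A = ENNReal.ofReal (lam i) * (Ms i).toFun s A
          + ENNReal.ofReal (1 - lam i) * (Ts i).toFun s A) ∧
      Compatible Cs}

/-!
Mixing commutes with adding noise: with `ν = aλ + bμ`,
`a (λ M + (1 - λ) T₁) + b (μ M + (1 - μ) T₂) = ν M + (1 - ν) T`, where `T` is the mixture of
`T₁` and `T₂` with weights proportional to `a (1 - λ)` and `b (1 - μ)`, again a trivial
observable. The same mixture of two joint observables is a joint observable for the mixed
marginals, so compatibility is preserved.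
-/

section Mixing

omit [CompleteSpace V]

namespace Observable

variable {K : Set V} {α : Type*} [MeasurableSpace α]

noncomputable def mix (a b : ℝ) (ha : 0 ≤ a) (hb : 0 ≤ b) (hab : a + b = 1)
    (O₁ O₂ : Observable K α) : Observable K α where
  toFun s := ENNReal.ofReal a • O₁.toFun s + ENNReal.ofReal b • O₂.toFun s
  prob s := by
    have := O₁.prob s
    have := O₂.prob s
    constructor
    simp [← ENNReal.ofReal_add ha hb, hab]
  sigmaAffine lam v s hlam hsum hv A hA := by
    simp only [Measure.coe_add, Measure.coe_smul, Pi.add_apply, Pi.smul_apply, smul_eq_mul]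
    rw [O₁.sigmaAffine lam v s hlam hsum hv A hA, O₂.sigmaAffine lam v s hlam hsum hv A hA,
      ← ENNReal.tsum_mul_left, ← ENNReal.tsum_mul_left, ← ENNReal.tsum_add]
    exact tsum_congr fun i => by ring

@[simp]
lemma mix_apply {a b : ℝ} (ha : 0 ≤ a) (hb : 0 ≤ b) (hab : a + b = 1)
    (O₁ O₂ : Observable K α) (s : K) (A : Set α) :
    (mix a b ha hb hab O₁ O₂).toFun s A
      = ENNReal.ofReal a * O₁.toFun s A + ENNReal.ofReal b * O₂.toFun s A := by
  simp [mix]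

end Observable

variable {K : Set V}

lemma IsTrivial.mix {T₁ T₂ : Observable K ℝ} (h₁ : IsTrivial T₁) (h₂ : IsTrivial T₂)
    {a b : ℝ} (ha : 0 ≤ a) (hb : 0 ≤ b) (hab : a + b = 1) :
    IsTrivial (Observable.mix a b ha hb hab T₁ T₂) := by
  obtain ⟨p, hp⟩ := h₁
  obtain ⟨q, hq⟩ := h₂
  exact ⟨ENNReal.ofReal a • p + ENNReal.ofReal b • q, fun s => by simp [Observable.mix, hp, hq]⟩

lemma IsTrivial.exists_combination {T₁ T₂ : Observable K ℝ} (h₁ : IsTrivial T₁)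
    (h₂ : IsTrivial T₂) {c₁ c₂ : ℝ} (hc₁ : 0 ≤ c₁) (hc₂ : 0 ≤ c₂) :
    ∃ T : Observable K ℝ, IsTrivial T ∧ ∀ s A,
      ENNReal.ofReal (c₁ + c₂) * T.toFun s A
        = ENNReal.ofReal c₁ * T₁.toFun s A + ENNReal.ofReal c₂ * T₂.toFun s A := by
  rcases (add_nonneg hc₁ hc₂).eq_or_lt with hc | hc
  · have hc₁' : c₁ = 0 := by linarith
    have hc₂' : c₂ = 0 := by linarith
    exact ⟨T₁, h₁, fun s A => by simp [hc₁', hc₂']⟩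
  · have hsum : c₁ / (c₁ + c₂) + c₂ / (c₁ + c₂) = 1 := by
      rw [← add_div, div_self hc.ne']
    refine ⟨Observable.mix _ _ (by positivity) (by positivity) hsum T₁ T₂,
      h₁.mix h₂ _ _ hsum, fun s A => ?_⟩
    rw [Observable.mix_apply, mul_add, ← mul_assoc, ← mul_assoc, ← ENNReal.ofReal_mul hc.le,
      ← ENNReal.ofReal_mul hc.le, mul_div_cancel₀ _ hc.ne', mul_div_cancel₀ _ hc.ne']

lemma Compatible.mix {n : ℕ} {Cs₁ Cs₂ : Fin n → Observable K ℝ} (h₁ : Compatible Cs₁)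
    (h₂ : Compatible Cs₂) {a b : ℝ} (ha : 0 ≤ a) (hb : 0 ≤ b) (hab : a + b = 1) :
    Compatible fun i => Observable.mix a b ha hb hab (Cs₁ i) (Cs₂ i) := by
  obtain ⟨J₁, hJ₁⟩ := h₁
  obtain ⟨J₂, hJ₂⟩ := h₂
  exact ⟨Observable.mix a b ha hb hab J₁ J₂, fun s A hA i => by simp [hJ₁ s A hA, hJ₂ s A hA]⟩

lemma exists_isTrivial_mix_eq {M C₁ C₂ T₁ T₂ : Observable K ℝ} {lam mu a b : ℝ}
    (hlam : lam ∈ Set.Icc (0 : ℝ) 1) (hmu : mu ∈ Set.Icc (0 : ℝ) 1)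
    (ha : 0 ≤ a) (hb : 0 ≤ b) (hab : a + b = 1)
    (hT₁ : IsTrivial T₁) (hT₂ : IsTrivial T₂)
    (hC₁ : ∀ (s : K) (A : Set ℝ), MeasurableSet A → C₁.toFun s A
      = ENNReal.ofReal lam * M.toFun s A + ENNReal.ofReal (1 - lam) * T₁.toFun s A)
    (hC₂ : ∀ (s : K) (A : Set ℝ), MeasurableSet A → C₂.toFun s A
      = ENNReal.ofReal mu * M.toFun s A + ENNReal.ofReal (1 - mu) * T₂.toFun s A) :
    ∃ T : Observable K ℝ, IsTrivial T ∧ ∀ (s : K) (A : Set ℝ), MeasurableSet A →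
      (Observable.mix a b ha hb hab C₁ C₂).toFun s A
        = ENNReal.ofReal (a * lam + b * mu) * M.toFun s A
          + ENNReal.ofReal (1 - (a * lam + b * mu)) * T.toFun s A := by
  have hc₁ : 0 ≤ a * (1 - lam) := mul_nonneg ha (by linarith [hlam.2])
  have hc₂ : 0 ≤ b * (1 - mu) := mul_nonneg hb (by linarith [hmu.2])
  have hnoise : a * (1 - lam) + b * (1 - mu) = 1 - (a * lam + b * mu) := by
    linear_combination hab
  obtain ⟨T, hT, hTeq⟩ := hT₁.exists_combination hT₂ hc₁ hc₂
  refine ⟨T, hT, fun s A hA => ?_⟩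
  rw [← hnoise, hTeq, Observable.mix_apply, hC₁ s A hA, hC₂ s A hA,
    ENNReal.ofReal_add (mul_nonneg ha hlam.1) (mul_nonneg hb hmu.1)]
  simp only [ENNReal.ofReal_mul ha, ENNReal.ofReal_mul hb]
  ring

end Mixing

theorem compatRegion_convex_general {K : Set V} {n : ℕ}
    (Ms : Fin n → Observable K ℝ) :
    Convex ℝ (CompatRegion Ms) ∧
      CompatRegion Ms ⊆ Set.Icc (0 : Fin n → ℝ) 1 := by
  refine ⟨?_, fun lam hlam => ⟨fun i => (hlam.1 i).1, fun i => (hlam.1 i).2⟩⟩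
  rintro lam ⟨hlam, Ts₁, Cs₁, hT₁, hC₁, hCs₁⟩ mu ⟨hmu, Ts₂, Cs₂, hT₂, hC₂, hCs₂⟩ a b ha hb hab
  choose Ts hTs hCs using fun i =>
    exists_isTrivial_mix_eq (hlam i) (hmu i) ha hb hab (hT₁ i) (hT₂ i) (hC₁ i) (hC₂ i)
  exact ⟨fun i => convex_Icc (0 : ℝ) 1 (hlam i) (hmu i) ha hb hab, Ts, _, hTs, hCs,
    hCs₁.mix hCs₂ ha hb hab⟩

/-- The compatibility region `J(M₁, …, Mₙ)` is a convex
subset of `[0,1]ⁿ`. -/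
theorem compatRegion_convex {K : Set V} (hK : SigmaConvex K) {n : ℕ}
    (Ms : Fin n → Observable K ℝ) :
    Convex ℝ (CompatRegion Ms) ∧
      CompatRegion Ms ⊆ Set.Icc (0 : Fin n → ℝ) 1 :=
  compatRegion_convex_general Ms
end

section
/- Let V be a finite-dimensional real normed space and let K ⊆ V be a convex set that is a base of a generating positive cone: with V⁺ = {αs : α ≥ 0, s ∈ K}, every nonzero v ∈ V⁺ has a unique representation v = αs with α > 0 and s ∈ K, and V = V⁺ − V⁺. If M is an observable on K, then there exists a unique normalized vector-valued measure Γ for K such that Γ(A)(s) = M(s)(A) for every s ∈ K and every Borel set A ⊆ ℝ. -/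
/-
Fix a Borel set `A`. By σ-affinity, `s ↦ M(s)(A)` is affine on `K`. Because `K` is a base of the
cone `V⁺`, the positively homogeneous extension `α s ↦ α M(s)(A)` is well defined and additive
on `V⁺`, and since `V = V⁺ - V⁺` it extends further to a linear functional `Γ(A)` on `V`, which is
continuous because `V` is finite-dimensional. Uniqueness holds because `K` spans `V`.
-/

open MeasureTheory

variable {V : Type*} [NormedAddCommGroup V] [NormedSpace ℝ V]

/-- A normalized vector-valued measure (NVM) for `K`: a map `Γ` from the Borel
sets of `ℝ` to the continuous dual `V*` of `V` such that for every `s ∈ K` the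
set function `A ↦ Γ(A)(s)` is a Borel probability measure on `ℝ`. -/
def IsNVM (K : Set V) (Γ : Set ℝ → (V →L[ℝ] ℝ)) : Prop :=
  ∀ s ∈ K, ∃ μ : Measure ℝ, IsProbabilityMeasure μ ∧
    ∀ A : Set ℝ, MeasurableSet A → Γ A s = (μ A).toReal

section ConeBase

variable {E : Type*} [AddCommGroup E] [Module ℝ E] {K : Set E}

def HasUniqueConeRep (K : Set E) : Prop :=
  ∀ (α β : ℝ) (s t : E), 0 < α → 0 < β → s ∈ K → t ∈ K → α • s = β • t → α = β ∧ s = t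

def ConeIsGenerating (K : Set E) : Prop :=
  ∀ v : E, ∃ (α β : ℝ) (s t : E), 0 ≤ α ∧ 0 ≤ β ∧ s ∈ K ∧ t ∈ K ∧ v = α • s - β • t

def IsConvexAffine (m : K → ℝ) : Prop :=
  ∀ (s t u : K) (l : ℝ), 0 ≤ l → l ≤ 1 → (u : E) = l • (s : E) + (1 - l) • (t : E) →
    m u = l * m s + (1 - l) * m t

theorem HasUniqueConeRep.zero_notMem (hbase : HasUniqueConeRep K) : (0 : E) ∉ K := fun h0 => by
  have := (hbase 1 2 0 0 one_pos two_pos h0 h0 (by simp)).1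
  norm_num at this

theorem HasUniqueConeRep.mul_eq_of_smul_eq (hbase : HasUniqueConeRep K) (m : K → ℝ)
    {γ γ' : ℝ} {u u' : K} (hγ : 0 ≤ γ) (hγ' : 0 ≤ γ') (h : γ • (u : E) = γ' • (u' : E)) :
    γ * m u = γ' * m u' := by
  have smul_ne_zero_of_pos {c : ℝ} {w : K} (hc : 0 < c) : c • (w : E) ≠ 0 :=
    smul_ne_zero hc.ne' fun hw => hbase.zero_notMem (hw ▸ w.2)
  rcases hγ.eq_or_lt with rfl | hpos <;> rcases hγ'.eq_or_lt with rfl | hpos'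
  · simp
  · exact absurd (h.symm.trans (zero_smul ℝ _)) (smul_ne_zero_of_pos hpos')
  · exact absurd (h.trans (zero_smul ℝ _)) (smul_ne_zero_of_pos hpos)
  · obtain ⟨rfl, hu⟩ := hbase γ γ' u u' hpos hpos' u.2 u'.2 h
    rw [Subtype.ext hu]

theorem IsConvexAffine.exists_add_smul_eq {m : K → ℝ} (hconv : Convex ℝ K)
    (haff : IsConvexAffine m) {α β : ℝ} (hα : 0 ≤ α) (hβ : 0 ≤ β) (s t : K) :
    ∃ (γ : ℝ) (u : K), 0 ≤ γ ∧ α • (s : E) + β • (t : E) = γ • (u : E) ∧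
      α * m s + β * m t = γ * m u := by
  rcases (add_nonneg hα hβ).eq_or_lt with hsum | hsum
  · obtain ⟨rfl, rfl⟩ : α = 0 ∧ β = 0 := ⟨by linarith, by linarith⟩
    exact ⟨0, s, le_rfl, by simp, by simp⟩
  have hcomp : 1 - α / (α + β) = β / (α + β) := by field_simp; ring
  let u : K := ⟨(α / (α + β)) • (s : E) + (β / (α + β)) • (t : E),
    hconv s.2 t.2 (by positivity) (by positivity) (by field_simp)⟩
  refine ⟨α + β, u, hsum.le, ?_, ?_⟩
  · simp only [u, smul_add, smul_smul, mul_div_cancel₀ _ hsum.ne']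
  · rw [haff s t u (α / (α + β)) (by positivity) (div_le_one_of_le₀ (by linarith) hsum.le)
      (by rw [hcomp]), hcomp]
    field_simp

theorem IsConvexAffine.add_mul_eq_of_add_smul_eq {m : K → ℝ} (hconv : Convex ℝ K)
    (hbase : HasUniqueConeRep K) (haff : IsConvexAffine m) {α β α' β' : ℝ} (hα : 0 ≤ α)
    (hβ : 0 ≤ β) (hα' : 0 ≤ α') (hβ' : 0 ≤ β') {s t s' t' : K}
    (h : α • (s : E) + β • (t : E) = α' • (s' : E) + β' • (t' : E)) :
    α * m s + β * m t = α' * m s' + β' * m t' := by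
  obtain ⟨γ, u, hγ, hu, hmu⟩ := haff.exists_add_smul_eq hconv hα hβ s t
  obtain ⟨γ', u', hγ', hu', hmu'⟩ := haff.exists_add_smul_eq hconv hα' hβ' s' t'
  rw [hmu, hmu']
  exact hbase.mul_eq_of_smul_eq m hγ hγ' (hu.symm.trans (h.trans hu'))

theorem IsConvexAffine.sub_mul_eq_of_sub_smul_eq {m : K → ℝ} (hconv : Convex ℝ K)
    (hbase : HasUniqueConeRep K) (haff : IsConvexAffine m) {α β α' β' : ℝ} (hα : 0 ≤ α)
    (hβ : 0 ≤ β) (hα' : 0 ≤ α') (hβ' : 0 ≤ β') {s t s' t' : K}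
    (h : α • (s : E) - β • (t : E) = α' • (s' : E) - β' • (t' : E)) :
    α * m s - β * m t = α' * m s' - β' * m t' := by
  have := haff.add_mul_eq_of_add_smul_eq hconv hbase hα hβ' hα' hβ
    (sub_eq_sub_iff_add_eq_add.mp h)
  linarith

theorem IsConvexAffine.exists_linearMap_eq {m : K → ℝ} (hconv : Convex ℝ K)
    (hbase : HasUniqueConeRep K) (hgen : ConeIsGenerating K) (haff : IsConvexAffine m) :
    ∃ f : E →ₗ[ℝ] ℝ, ∀ s : K, f s = m s := by
  choose α β s t hα hβ hs ht hv using hgen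
  let L (v : E) : ℝ := α v * m ⟨s v, hs v⟩ - β v * m ⟨t v, ht v⟩
  have L_eq {v : E} (a b : ℝ) (p q : K) (ha : 0 ≤ a) (hb : 0 ≤ b)
      (h : v = a • (p : E) - b • (q : E)) : L v = a * m p - b * m q :=
    haff.sub_mul_eq_of_sub_smul_eq hconv hbase (hα v) (hβ v) ha hb ((hv v).symm.trans h)
  have map_add (v w : E) : L (v + w) = L v + L w := by
    obtain ⟨γ, u, hγ, hu, hmu⟩ :=
      haff.exists_add_smul_eq hconv (hα v) (hα w) ⟨s v, hs v⟩ ⟨s w, hs w⟩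
    obtain ⟨δ, u', hδ, hu', hmu'⟩ :=
      haff.exists_add_smul_eq hconv (hβ v) (hβ w) ⟨t v, ht v⟩ ⟨t w, ht w⟩
    have hvw : v + w = γ • (u : E) - δ • (u' : E) := by
      rw [← hu, ← hu']
      linear_combination (norm := module) hv v + hv w
    rw [L_eq γ δ u u' hγ hδ hvw, ← hmu, ← hmu']
    ring
  have map_smul (c : ℝ) (v : E) : L (c • v) = c * L v := by
    have hcv : c • v = c • (α v • s v - β v • t v) := congrArg (c • ·) (hv v)
    rcases le_or_gt 0 c with hc | hc
    · rw [L_eq (c * α v) (c * β v) ⟨s v, hs v⟩ ⟨t v, ht v⟩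
        (mul_nonneg hc (hα v)) (mul_nonneg hc (hβ v))
        (by rw [hcv]; module)]
      ring
    · have hc' : 0 ≤ -c := by linarith
      rw [L_eq (-c * β v) (-c * α v) ⟨t v, ht v⟩ ⟨s v, hs v⟩
        (mul_nonneg hc' (hβ v)) (mul_nonneg hc' (hα v))
        (by rw [hcv]; module)]
      ring
  refine ⟨⟨⟨L, map_add⟩, map_smul⟩, fun p => ?_⟩
  simpa using L_eq 1 0 p p zero_le_one le_rfl (by simp)

theorem ConeIsGenerating.span_eq_top (hgen : ConeIsGenerating K) : Submodule.span ℝ K = ⊤ :=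
  eq_top_iff.mpr fun v _ => by
    obtain ⟨α, β, s, t, -, -, hs, ht, rfl⟩ := hgen v
    exact sub_mem (Submodule.smul_mem _ _ (Submodule.subset_span hs))
      (Submodule.smul_mem _ _ (Submodule.subset_span ht))

end ConeBase

theorem hasSum_of_forall_two_le_eq_zero {M : Type*} [AddCommMonoid M] [TopologicalSpace M]
    {f : ℕ → M} (hf : ∀ i, 2 ≤ i → f i = 0) : HasSum f (f 0 + f 1) := by
  simpa [Finset.sum_range_succ] using
    hasSum_sum_of_ne_finset_zero (s := Finset.range 2) fun i hi => hf i (by simp at hi; omega)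

theorem Observable.isConvexAffine_toReal {K : Set V} {α : Type*} [MeasurableSpace α]
    (M : Observable K α) {A : Set α} (hA : MeasurableSet A) :
    IsConvexAffine fun s => (M.toFun s A).toReal := by
  intro s t u l hl0 hl1 hu
  let lam (i : ℕ) : ℝ := if i = 0 then l else if i = 1 then 1 - l else 0
  let v (i : ℕ) : K := if i = 0 then s else t
  have hlam : ∀ i, 0 ≤ lam i := by
    intro i; simp only [lam]; split_ifs <;> linarith
  have hlam_eq_zero (i : ℕ) (hi : 2 ≤ i) : lam i = 0 := by
    simp [lam, show i ≠ 0 by omega, show i ≠ 1 by omega]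
  have hsum : HasSum lam 1 := by
    simpa [lam] using hasSum_of_forall_two_le_eq_zero hlam_eq_zero
  have hsumv : HasSum (fun i => lam i • (v i : V)) u := by
    simpa [lam, v, ← hu] using hasSum_of_forall_two_le_eq_zero
      (f := fun i => lam i • (v i : V)) fun i hi => by simp [hlam_eq_zero i hi]
  have hM := M.sigmaAffine lam v u hlam hsum hsumv A hA
  rw [(hasSum_of_forall_two_le_eq_zero fun i hi => by simp [hlam_eq_zero i hi]).tsum_eq] at hM
  have := M.prob s
  have := M.prob t
  simp only [hM, lam, v, ↓reduceIte, one_ne_zero, ENNReal.toReal_add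
    (ENNReal.mul_ne_top ENNReal.ofReal_ne_top (measure_ne_top _ _))
    (ENNReal.mul_ne_top ENNReal.ofReal_ne_top (measure_ne_top _ _)), ENNReal.toReal_mul,
    ENNReal.toReal_ofReal hl0, ENNReal.toReal_ofReal (sub_nonneg.mpr hl1)]

/-- Let `V` be a finite-dimensional real normed space and let
`K ⊆ V` be a convex set that is a base of a generating positive cone
`V⁺ = {αs : α ≥ 0, s ∈ K}`: representations `v = αs` with `α > 0`, `s ∈ K` are
unique, and `V = V⁺ - V⁺`.  Then every observable `M` on `K` arises from a
normalized vector-valued measure `Γ` with `Γ(A)(s) = M(s)(A)` for all `s ∈ K`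
and Borel `A ⊆ ℝ`, and `Γ` is unique (as a function of Borel sets). -/
theorem observable_gives_unique_nvm [FiniteDimensional ℝ V] {K : Set V}
    (hconv : Convex ℝ K)
    (hbase : ∀ (α β : ℝ) (s t : V), 0 < α → 0 < β → s ∈ K → t ∈ K →
      α • s = β • t → α = β ∧ s = t)
    (hgen : ∀ v : V, ∃ (α β : ℝ) (s t : V), 0 ≤ α ∧ 0 ≤ β ∧ s ∈ K ∧ t ∈ K ∧
      v = α • s - β • t)
    (M : Observable K ℝ) :
    ∃ Γ : Set ℝ → (V →L[ℝ] ℝ), IsNVM K Γ ∧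
      (∀ (s : K) (A : Set ℝ), MeasurableSet A →
        Γ A (s : V) = (M.toFun s A).toReal) ∧
      ∀ Γ' : Set ℝ → (V →L[ℝ] ℝ), IsNVM K Γ' →
        (∀ (s : K) (A : Set ℝ), MeasurableSet A →
          Γ' A (s : V) = (M.toFun s A).toReal) →
        ∀ A : Set ℝ, MeasurableSet A → Γ' A = Γ A := by
  have extend (A : Set ℝ) : ∃ f : V →L[ℝ] ℝ, MeasurableSet A →
      ∀ s : K, f s = (M.toFun s A).toReal := by
    by_cases hA : MeasurableSet A
    · obtain ⟨f, hf⟩ := (M.isConvexAffine_toReal hA).exists_linearMap_eq hconv hbase hgen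
      exact ⟨LinearMap.toContinuousLinearMap f, fun _ => hf⟩
    · exact ⟨0, fun h => absurd h hA⟩
  choose Γ hΓ using extend
  refine ⟨Γ, fun s hs => ⟨M.toFun ⟨s, hs⟩, M.prob _, fun A hA => hΓ A hA ⟨s, hs⟩⟩,
    fun s A hA => hΓ A hA s, fun Γ' _ hΓ' A hA => ?_⟩
  exact ContinuousLinearMap.coe_injective <| LinearMap.ext_on (ConeIsGenerating.span_eq_top hgen)
    fun v hv => by simp [hΓ' ⟨v, hv⟩ A hA, hΓ A hA ⟨v, hv⟩]
end

section
/- Let (Ω, 𝒜) be a measurable space and let K be the set of probability measures on (Ω, 𝒜). Let M̂, N̂ : B(ℝ) → F(Ω) be maps into the measurable functions Ω → [0,1] satisfying M̂(ℝ) = 1, N̂(ℝ) = 1 and countable additivity pointwise: M̂(⋃ A_i)(ω) = ∑ M̂(A_i)(ω) for disjoint Borel sets A_i and all ω (similarly for N̂). Then the fuzzy observables M(μ)(A) = ∫ M̂(A) dμ and N(μ)(A) = ∫ N̂(A) dμ are compatible: the 2-dimensional observable M̃ determined by M̃(μ)(A × B) = ∫ M̂(A)·N̂(B) dμ is a joint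 observable for M and N. -/
/-!
Pointwise in `ω`, `M̂(·)(ω)` is a nonnegative countably additive set function of total mass `1`,
so `ω ↦ M̂(·)(ω)` is a Markov kernel `Ω → ℝ`, and likewise for `N̂`. Composing the product kernel
with `μ` is integration against `μ`, hence σ-affine; it gives `A × B` the mass `∫ M̂(A) N̂(B) dμ`,
and its marginals are `M` and `N` because `M̂(ℝ) = N̂(ℝ) = 1`.
-/

open MeasureTheory
open scoped ENNReal

/-- An (`α`-valued) observable on the probabilistic theory `K` of all Borel
probability measures on a measurable space `Ω`: a σ-affine map sending
probability measures on `Ω` to Borel probability measures on `α`.  Taking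
`α = ℝ` gives ordinary (1-dimensional) observables, and `α = ℝ × ℝ` gives
2-dimensional observables. -/
structure CObservable (Ω : Type*) [MeasurableSpace Ω] (α : Type*)
    [MeasurableSpace α] where
  toFun : Measure Ω → Measure α
  prob : ∀ μ : Measure Ω, IsProbabilityMeasure μ → IsProbabilityMeasure (toFun μ)
  sigmaAffine : ∀ (lam : ℕ → ℝ≥0∞) (μs : ℕ → Measure Ω),
    (∀ i, IsProbabilityMeasure (μs i)) → (∑' i, lam i) = 1 →
    ∀ A : Set α, MeasurableSet A →
      toFun (Measure.sum fun i => lam i • μs i) A = ∑' i, lam i * toFun (μs i) A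

open ProbabilityTheory Set Function

def IsCountablyAdditive {α : Type*} [MeasurableSpace α] (f : Set α → ℝ) : Prop :=
  ∀ A : ℕ → Set α, (∀ i, MeasurableSet (A i)) → Pairwise (Disjoint on A) →
    HasSum (fun i => f (A i)) (f (⋃ i, A i))

namespace IsCountablyAdditive

variable {α : Type*} [MeasurableSpace α] {f : Set α → ℝ}

lemma apply_empty (hf : IsCountablyAdditive f) : f ∅ = 0 := by
  have h := hf (fun _ => ∅) (fun _ => .empty) (fun _ _ _ => disjoint_bot_left)
  rw [iUnion_empty] at h
  exact tendsto_nhds_unique tendsto_const_nhds h.summable.tendsto_atTop_zero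

noncomputable def toMeasure (hf : IsCountablyAdditive f)
    (hf_nonneg : ∀ A, MeasurableSet A → 0 ≤ f A) : Measure α :=
  Measure.ofMeasurable (fun A _ => ENNReal.ofReal (f A)) (by simp [hf.apply_empty])
    fun A hA hdisj => by
      have h := hf A hA hdisj
      rw [← h.tsum_eq, ENNReal.ofReal_tsum_of_nonneg (fun i => hf_nonneg _ (hA i)) h.summable]

lemma toMeasure_apply (hf : IsCountablyAdditive f) (hf_nonneg : ∀ A, MeasurableSet A → 0 ≤ f A)
    {A : Set α} (hA : MeasurableSet A) : hf.toMeasure hf_nonneg A = ENNReal.ofReal (f A) :=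
  Measure.ofMeasurable_apply A hA

end IsCountablyAdditive

section FuzzyKernel

variable {Ω α : Type*} [MeasurableSpace Ω] [MeasurableSpace α] (F : Set α → Ω → ℝ)
  (hmeas : ∀ A, MeasurableSet A → Measurable (F A))
  (hnonneg : ∀ A ω, MeasurableSet A → 0 ≤ F A ω)
  (hadd : ∀ ω, IsCountablyAdditive (F · ω))

noncomputable def fuzzyKernel : Kernel Ω α where
  toFun ω := (hadd ω).toMeasure fun A hA => hnonneg A ω hA
  measurable' := Measure.measurable_of_measurable_coe _ fun A hA => by
    convert (hmeas A hA).ennreal_ofReal using 1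
    exact funext fun ω => (hadd ω).toMeasure_apply _ hA

lemma fuzzyKernel_apply (ω : Ω) {A : Set α} (hA : MeasurableSet A) :
    fuzzyKernel F hmeas hnonneg hadd ω A = ENNReal.ofReal (F A ω) :=
  (hadd ω).toMeasure_apply (fun A hA => hnonneg A ω hA) hA

lemma isMarkovKernel_fuzzyKernel (hone : ∀ ω, F univ ω = 1) :
    IsMarkovKernel (fuzzyKernel F hmeas hnonneg hadd) :=
  ⟨fun ω => ⟨by simp [fuzzyKernel_apply F hmeas hnonneg hadd ω .univ, hone]⟩⟩

include hmeas hnonneg hadd in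
lemma exists_isMarkovKernel_apply_eq_ofReal (hone : ∀ ω, F univ ω = 1) :
    ∃ κ : Kernel Ω α, IsMarkovKernel κ ∧
      ∀ ω A, MeasurableSet A → κ ω A = ENNReal.ofReal (F A ω) :=
  ⟨fuzzyKernel F hmeas hnonneg hadd, isMarkovKernel_fuzzyKernel F hmeas hnonneg hadd hone,
    fun ω _ hA => fuzzyKernel_apply F hmeas hnonneg hadd ω hA⟩

end FuzzyKernel

namespace CObservable

variable {Ω α : Type*} [MeasurableSpace Ω] [MeasurableSpace α]

noncomputable def ofKernel (κ : Kernel Ω α) [IsMarkovKernel κ] : CObservable Ω α where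
  toFun μ := κ ∘ₘ μ
  prob _ _ := inferInstance
  sigmaAffine lam μs _ _ A hA := by
    simp only [Measure.bind_apply hA κ.aemeasurable, lintegral_sum_measure,
      lintegral_smul_measure, smul_eq_mul]

lemma ofKernel_apply (κ : Kernel Ω α) [IsMarkovKernel κ] (μ : Measure Ω) {A : Set α}
    (hA : MeasurableSet A) : (ofKernel κ).toFun μ A = ∫⁻ ω, κ ω A ∂μ :=
  Measure.bind_apply hA κ.aemeasurable

lemma ofKernel_prod_apply_prod {β : Type*} [MeasurableSpace β] (κ : Kernel Ω α) (η : Kernel Ω β)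
    [IsMarkovKernel κ] [IsMarkovKernel η] (μ : Measure Ω) {A : Set α} {B : Set β}
    (hA : MeasurableSet A) (hB : MeasurableSet B) :
    (ofKernel (κ ×ₖ η)).toFun μ (A ×ˢ B) = ∫⁻ ω, κ ω A * η ω B ∂μ := by
  simp only [ofKernel_apply _ _ (hA.prod hB), Kernel.prod_apply_prod]

end CObservable

lemma ofReal_integral_mul_eq_lintegral {Ω : Type*} [MeasurableSpace Ω] {μ : Measure Ω}
    [IsFiniteMeasure μ] {f g : Ω → ℝ} (hf : Measurable f) (hg : Measurable g)
    (hf01 : ∀ ω, f ω ∈ Icc 0 1) (hg01 : ∀ ω, g ω ∈ Icc 0 1) :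
    ENNReal.ofReal (∫ ω, f ω * g ω ∂μ) =
      ∫⁻ ω, ENNReal.ofReal (f ω) * ENNReal.ofReal (g ω) ∂μ := by
  have hfg_nonneg (ω : Ω) : 0 ≤ f ω * g ω := mul_nonneg (hf01 ω).1 (hg01 ω).1
  have hfg_int : Integrable (fun ω => f ω * g ω) μ :=
    .of_bound (hf.mul hg).aestronglyMeasurable 1 <| .of_forall fun ω => by
      rw [Real.norm_of_nonneg (hfg_nonneg ω)]
      exact mul_le_one₀ (hf01 ω).2 (hg01 ω).1 (hg01 ω).2
  rw [ofReal_integral_eq_lintegral_ofReal hfg_int (.of_forall hfg_nonneg)]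
  simp only [ENNReal.ofReal_mul (hf01 _).1]

/-- For classical probability theory on a measurable space
`(Ω, 𝒜)`, any two fuzzy observables `M(μ)(A) = ∫ M̂(A) dμ` and
`N(μ)(A) = ∫ N̂(A) dμ` (where `M̂, N̂` map Borel sets to measurable functions
`Ω → [0,1]`, send `ℝ` to `1`, and are countably additive pointwise) are
compatible: the 2-dimensional observable determined by
`M̃(μ)(A × B) = ∫ M̂(A) · N̂(B) dμ` is a joint observable for `M` and `N`. -/
theorem fuzzy_observables_compatible {Ω : Type*} [MeasurableSpace Ω]
    (Mhat Nhat : Set ℝ → Ω → ℝ)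
    (hMmeas : ∀ A : Set ℝ, MeasurableSet A → Measurable (Mhat A))
    (hNmeas : ∀ A : Set ℝ, MeasurableSet A → Measurable (Nhat A))
    (hMrange : ∀ (A : Set ℝ) (ω : Ω), MeasurableSet A →
      Mhat A ω ∈ Set.Icc (0 : ℝ) 1)
    (hNrange : ∀ (A : Set ℝ) (ω : Ω), MeasurableSet A →
      Nhat A ω ∈ Set.Icc (0 : ℝ) 1)
    (hMone : ∀ ω : Ω, Mhat Set.univ ω = 1)
    (hNone : ∀ ω : Ω, Nhat Set.univ ω = 1)
    (hMadd : ∀ (A : ℕ → Set ℝ), (∀ i, MeasurableSet (A i)) →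
      Pairwise (Function.onFun Disjoint A) →
      ∀ ω : Ω, HasSum (fun i => Mhat (A i) ω) (Mhat (⋃ i, A i) ω))
    (hNadd : ∀ (A : ℕ → Set ℝ), (∀ i, MeasurableSet (A i)) →
      Pairwise (Function.onFun Disjoint A) →
      ∀ ω : Ω, HasSum (fun i => Nhat (A i) ω) (Nhat (⋃ i, A i) ω))
    (M N : CObservable Ω ℝ)
    (hM : ∀ μ : Measure Ω, IsProbabilityMeasure μ →
      ∀ A : Set ℝ, MeasurableSet A →
        M.toFun μ A = ENNReal.ofReal (∫ ω, Mhat A ω ∂μ))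
    (hN : ∀ μ : Measure Ω, IsProbabilityMeasure μ →
      ∀ A : Set ℝ, MeasurableSet A →
        N.toFun μ A = ENNReal.ofReal (∫ ω, Nhat A ω ∂μ)) :
    ∃ J : CObservable Ω (ℝ × ℝ),
      (∀ μ : Measure Ω, IsProbabilityMeasure μ →
        ∀ A B : Set ℝ, MeasurableSet A → MeasurableSet B →
          J.toFun μ (A ×ˢ B) = ENNReal.ofReal (∫ ω, Mhat A ω * Nhat B ω ∂μ)) ∧
      (∀ μ : Measure Ω, IsProbabilityMeasure μ →
        ∀ A : Set ℝ, MeasurableSet A →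
          J.toFun μ (A ×ˢ (Set.univ : Set ℝ)) = M.toFun μ A ∧
          J.toFun μ ((Set.univ : Set ℝ) ×ˢ A) = N.toFun μ A) := by
  obtain ⟨κM, _, hκM⟩ := exists_isMarkovKernel_apply_eq_ofReal Mhat hMmeas
    (fun A ω hA => (hMrange A ω hA).1) (fun ω A hA hdisj => hMadd A hA hdisj ω) hMone
  obtain ⟨κN, _, hκN⟩ := exists_isMarkovKernel_apply_eq_ofReal Nhat hNmeas
    (fun A ω hA => (hNrange A ω hA).1) (fun ω A hA hdisj => hNadd A hA hdisj ω) hNone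
  have hJ : ∀ μ : Measure Ω, IsProbabilityMeasure μ →
      ∀ A B : Set ℝ, MeasurableSet A → MeasurableSet B →
        (CObservable.ofKernel (κM ×ₖ κN)).toFun μ (A ×ˢ B) =
          ENNReal.ofReal (∫ ω, Mhat A ω * Nhat B ω ∂μ) := by
    intro μ _ A B hA hB
    rw [CObservable.ofKernel_prod_apply_prod _ _ _ hA hB, ofReal_integral_mul_eq_lintegral
      (hMmeas A hA) (hNmeas B hB) (hMrange A · hA) (hNrange B · hB)]
    exact lintegral_congr fun ω => by rw [hκM ω A hA, hκN ω B hB]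
  refine ⟨CObservable.ofKernel (κM ×ₖ κN), hJ, fun μ hμ A hA => ⟨?_, ?_⟩⟩
  · simp only [hJ μ hμ A univ hA .univ, hM μ hμ A hA, hNone, mul_one]
  · simp only [hJ μ hμ univ A .univ hA, hN μ hμ A hA, hMone, one_mul]
end

section
/- There is no probability measure μ on the power set of Ω = {1, 2, 3, 4} such that μ({3,4}) = μ({2,4}) = μ({2,3}) = 1. Consequently, the 0–1 state γ₁ on the σ-class 𝒜 of even-cardinality subsets of Ω, defined by γ₁(∅) = 0, γ₁(Ω) = 1, γ₁({1,2}) = γ₁({1,3}) = γ₁({1,4}) = 0 and γ₁({3,4}) = γ₁({2,4}) = γ₁({2,3}) = 1, is not the restriction of any probability measure on the power set of Ω and hence is a nonclassical state. -/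
open MeasureTheory

lemma no_such_measure :
    ¬ ∃ μ : Measure ℕ, IsProbabilityMeasure μ ∧
      μ ({1, 2, 3, 4} : Set ℕ) = 1 ∧
      μ ({3, 4} : Set ℕ) = 1 ∧ μ ({2, 4} : Set ℕ) = 1 ∧
      μ ({2, 3} : Set ℕ) = 1 := by
  rintro ⟨μ, hp, -, h34, h24, h23⟩
  have hm : ∀ s : Set ℕ, MeasurableSet s := fun s => trivial
  have e2 : μ ({2} ∪ {3, 4} : Set ℕ) = μ ({2} : Set ℕ) + μ ({3, 4} : Set ℕ) :=
    measure_union (by simp [Set.disjoint_left]) (hm _)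
  have e3 : μ ({3} ∪ {2, 4} : Set ℕ) = μ ({3} : Set ℕ) + μ ({2, 4} : Set ℕ) :=
    measure_union (by simp [Set.disjoint_left]) (hm _)
  have h2 : μ ({2} : Set ℕ) = 0 := by
    have hle : μ ({2} ∪ {3, 4} : Set ℕ) ≤ 1 := prob_le_one
    rw [e2, h34] at hle
    have h' : μ ({2} : Set ℕ) + 1 ≤ 0 + 1 := by simpa using hle
    simpa using (ENNReal.add_le_add_iff_right (by norm_num)).mp h'
  have h3 : μ ({3} : Set ℕ) = 0 := by
    have hle : μ ({3} ∪ {2, 4} : Set ℕ) ≤ 1 := prob_le_one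
    rw [e3, h24] at hle
    have h' : μ ({3} : Set ℕ) + 1 ≤ 0 + 1 := by simpa using hle
    simpa using (ENNReal.add_le_add_iff_right (by norm_num)).mp h'
  have : μ ({2, 3} : Set ℕ) ≤ μ ({2} : Set ℕ) + μ ({3} : Set ℕ) := by
    have : ({2, 3} : Set ℕ) = {2} ∪ {3} := rfl
    rw [this]; exact measure_union_le _ _
  rw [h23, h2, h3] at this
  simp at this

/-- There is no probability measure `μ` on the power set of
`Ω = {1, 2, 3, 4}` with `μ({3,4}) = μ({2,4}) = μ({2,3}) = 1` (we realize a
probability measure on the power set of `Ω` as a probability measure on `ℕ`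
giving full measure to `{1,2,3,4}`).  Consequently, the 0–1 state `γ₁` on the
σ-class `𝒜` of even-cardinality subsets of `Ω`, with `γ₁(∅) = 0`, `γ₁(Ω) = 1`,
`γ₁({1,2}) = γ₁({1,3}) = γ₁({1,4}) = 0` and
`γ₁({3,4}) = γ₁({2,4}) = γ₁({2,3}) = 1`, is not the restriction of any
probability measure on the power set of `Ω`: it is a nonclassical state. -/
theorem gamma_one_nonclassical :
    (¬ ∃ μ : Measure ℕ, IsProbabilityMeasure μ ∧
      μ ({1, 2, 3, 4} : Set ℕ) = 1 ∧
      μ ({3, 4} : Set ℕ) = 1 ∧ μ ({2, 4} : Set ℕ) = 1 ∧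
      μ ({2, 3} : Set ℕ) = 1) ∧
    ∀ γ : Set ℕ → ℝ,
      γ (∅ : Set ℕ) = 0 → γ ({1, 2, 3, 4} : Set ℕ) = 1 →
      γ ({1, 2} : Set ℕ) = 0 → γ ({1, 3} : Set ℕ) = 0 →
      γ ({1, 4} : Set ℕ) = 0 → γ ({3, 4} : Set ℕ) = 1 →
      γ ({2, 4} : Set ℕ) = 1 → γ ({2, 3} : Set ℕ) = 1 →
      ¬ ∃ μ : Measure ℕ, IsProbabilityMeasure μ ∧
        μ ({1, 2, 3, 4} : Set ℕ) = 1 ∧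
        ∀ A : Set ℕ,
          A ∈ ({∅, {1, 2, 3, 4}, {1, 2}, {3, 4}, {1, 3}, {2, 4}, {1, 4},
            {2, 3}} : Set (Set ℕ)) →
          μ A = ENNReal.ofReal (γ A) := by
  refine ⟨no_such_measure, ?_⟩
  intro γ h0 hΩ h12 h13 h14 h34 h24 h23
  rintro ⟨μ, hp, hfull, hrest⟩
  apply no_such_measure
  refine ⟨μ, hp, hfull, ?_, ?_, ?_⟩
  · have := hrest ({3, 4} : Set ℕ) (by simp)
    rw [this, h34]; simp
  · have := hrest ({2, 4} : Set ℕ) (by simp)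
    rw [this, h24]; simp
  · have := hrest ({2, 3} : Set ℕ) (by simp)
    rw [this, h23]; simp
end
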